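/- arXiv:2510.06436 — 3 statements merged into one kernel-verified Lean document; each statement's English description precedes it below -/
import Mathlib

section
/- Let δ > 0, R > 0, and suppose R^comm = 3R + δ. Consider a finite family of trajectories p_i : [s_i, ∞) → ℝ^d, each R-bounded, with pairwise distinct start times s_i. Suppose that for each i, and for every j with s_j < s_i and ‖p_i(s_i) − p_j(s_i)‖ ≤ R^comm, the trajectories satisfy ‖p_i(t) − p_j(t)‖ ≥ δ for all t ≥ s_i. Then for all distinct i, j and all t ≥ max(s_i, s_j), ‖p_i(t) − p_j(t)‖ ≥ δ. -/
theorem stmt_4 (d : ℕ) (ι : Type*) [Fintype ι] (R δ Rcomm : ℝ)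
    (hδ : 0 < δ) (hR : 0 < R) (hRc : Rcomm = 3 * R + δ)
    (s : ι → ℝ) (hs : Function.Injective s)
    (p : ι → ℝ → EuclideanSpace ℝ (Fin d))
    (hb : ∀ i, ∀ t ≥ s i, ‖p i t - p i (s i)‖ ≤ R)
    (hcheck : ∀ i j, s j < s i → ‖p i (s i) - p j (s i)‖ ≤ Rcomm →
      ∀ t ≥ s i, ‖p i t - p j t‖ ≥ δ) :
    ∀ i j, i ≠ j → ∀ t ≥ max (s i) (s j), ‖p i t - p j t‖ ≥ δ := by
  have key : ∀ i j, s j < s i → ∀ t ≥ s i, δ ≤ ‖p i t - p j t‖ := by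
    intro i j hij t ht
    by_cases hc : ‖p i (s i) - p j (s i)‖ ≤ Rcomm
    · exact hcheck i j hij hc t ht
    · push_neg at hc
      rw [hRc] at hc
      have h1 : ‖p i t - p i (s i)‖ ≤ R := hb i t ht
      have h2 : ‖p j t - p j (s j)‖ ≤ R := hb j t (le_of_lt (lt_of_lt_of_le hij ht))
      have h3 : ‖p j (s i) - p j (s j)‖ ≤ R := hb j (s i) hij.le
      have h4 : ‖p j t - p j (s i)‖ ≤ 2 * R := by
        calc ‖p j t - p j (s i)‖ ≤ ‖p j t - p j (s j)‖ + ‖p j (s j) - p j (s i)‖ :=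
              norm_sub_le_norm_sub_add_norm_sub _ _ _
          _ ≤ R + R := by
              have := norm_sub_rev (p j (s j)) (p j (s i)); linarith [h2, h3]
          _ = 2 * R := by ring
      have h5 : ‖p i (s i) - p j (s i)‖ ≤ ‖p i (s i) - p i t‖ + ‖p i t - p j t‖ + ‖p j t - p j (s i)‖ := by
        have := norm_sub_le_norm_sub_add_norm_sub (p i (s i)) (p i t) (p j (s i))
        have h6 := norm_sub_le_norm_sub_add_norm_sub (p i t) (p j t) (p j (s i))
        linarith
      have h7 := norm_sub_rev (p i (s i)) (p i t)
      linarith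
  intro i j hij t ht
  rcases lt_or_gt_of_ne (fun h => hij (hs h)) with h | h
  · rw [norm_sub_rev]
    exact key j i h t (le_trans (le_max_right _ _) ht)
  · exact key i j h t (le_trans (le_max_left _ _) ht)
end

section
/- Let δ > 0, R > 0, R^comm = 3R + δ. Let p1 : [t1, ∞) → ℝ^d and p2 : [t2, ∞) → ℝ^d with t1 ≤ t2 be R-bounded. Suppose that either (a) ‖p1(t2) − p2(t2)‖ > R^comm, or (b) ‖p1(t2) − p2(t2)‖ ≤ R^comm and ‖p1(t) − p2(t)‖ ≥ δ for all t ≥ t2 (the later agent verified collision-freeness against its neighbor's committed trajectory). Then in both cases ‖p1(t) − p2(t)‖ ≥ δ for all t ≥ t2. -/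
theorem stmt_10 (d : ℕ) (R δ Rcomm t1 t2 : ℝ) (hδ : 0 < δ) (hR : 0 < R)
    (hRc : Rcomm = 3 * R + δ) (ht : t1 ≤ t2)
    (p1 p2 : ℝ → EuclideanSpace ℝ (Fin d))
    (hb1 : ∀ t ≥ t1, ‖p1 t - p1 t1‖ ≤ R)
    (hb2 : ∀ t ≥ t2, ‖p2 t - p2 t2‖ ≤ R)
    (hcase : ‖p1 t2 - p2 t2‖ > Rcomm ∨
      (‖p1 t2 - p2 t2‖ ≤ Rcomm ∧ ∀ t ≥ t2, ‖p1 t - p2 t‖ ≥ δ)) :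
    ∀ t ≥ t2, ‖p1 t - p2 t‖ ≥ δ := by
  intro t htt
  rcases hcase with h | ⟨_, h⟩
  · have h1 : ‖p1 t - p1 t2‖ ≤ 2 * R := by
      calc ‖p1 t - p1 t2‖ ≤ ‖p1 t - p1 t1‖ + ‖p1 t2 - p1 t1‖ := by
            rw [← dist_eq_norm, ← dist_eq_norm, ← dist_eq_norm]
            exact dist_triangle_right _ _ _
        _ ≤ 2 * R := by
            have := hb1 t (le_trans ht htt)
            have := hb1 t2 ht
            linarith
    have h2 := hb2 t htt
    have key : ‖p1 t2 - p2 t2‖ ≤ ‖p1 t - p2 t‖ + ‖p1 t - p1 t2‖ + ‖p2 t - p2 t2‖ := by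
      have : p1 t2 - p2 t2 = (p1 t - p2 t) - (p1 t - p1 t2) + (p2 t - p2 t2) := by abel
      rw [this]
      calc ‖(p1 t - p2 t) - (p1 t - p1 t2) + (p2 t - p2 t2)‖
          ≤ ‖(p1 t - p2 t) - (p1 t - p1 t2)‖ + ‖p2 t - p2 t2‖ := norm_add_le _ _
        _ ≤ ‖p1 t - p2 t‖ + ‖p1 t - p1 t2‖ + ‖p2 t - p2 t2‖ := by
            have := norm_sub_le (p1 t - p2 t) (p1 t - p1 t2); linarith
    linarith [hRc ▸ h]
  · exact h t htt
end

section
/- Suppose every committed trajectory in a system is R^plan-bounded and the communication radius satisfies R^comm = 3R^plan + δ with δ > 0. Let agent j plan at time t_j and let i be an agent with earlier planning time t_i < t_j such that ‖p_i(t_j) − p_j(t_j)‖ > R^comm (agent i is not a neighbor of j at time t_j). Then for all t ≥ t_j, ‖p_i(t) − p_j(t)‖ ≥ δ; i.e., non-neighbors at planning time can be safely ignored. -/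
theorem stmt_15 (d : ℕ) (Rplan δ Rcomm ti tj : ℝ) (hδ : 0 < δ)
    (hRc : Rcomm = 3 * Rplan + δ) (ht : ti < tj)
    (pi pj : ℝ → EuclideanSpace ℝ (Fin d))
    (hbi : ∀ t ≥ ti, ‖pi t - pi ti‖ ≤ Rplan)
    (hbj : ∀ t ≥ tj, ‖pj t - pj tj‖ ≤ Rplan)
    (hfar : ‖pi tj - pj tj‖ > Rcomm) :
    ∀ t ≥ tj, ‖pi t - pj t‖ ≥ δ := by
  intro t htj
  have h1 : ‖pi t - pi ti‖ ≤ Rplan := hbi t (le_trans ht.le htj)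
  have h2 : ‖pi tj - pi ti‖ ≤ Rplan := hbi tj ht.le
  have h3 : ‖pj t - pj tj‖ ≤ Rplan := hbj t htj
  have key : ‖pi tj - pj tj‖ ≤ ‖pi t - pj t‖ + ‖pi tj - pi ti‖ + ‖pi t - pi ti‖ + ‖pj t - pj tj‖ := by
    have : pi tj - pj tj = (pi t - pj t) + (pi tj - pi ti) - (pi t - pi ti) + (pj t - pj tj) := by
      abel
    rw [this]
    calc ‖(pi t - pj t) + (pi tj - pi ti) - (pi t - pi ti) + (pj t - pj tj)‖
        ≤ ‖(pi t - pj t) + (pi tj - pi ti) - (pi t - pi ti)‖ + ‖pj t - pj tj‖ := norm_add_le _ _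
      _ ≤ ‖(pi t - pj t) + (pi tj - pi ti)‖ + ‖pi t - pi ti‖ + ‖pj t - pj tj‖ := by
          gcongr; exact norm_sub_le _ _
      _ ≤ ‖pi t - pj t‖ + ‖pi tj - pi ti‖ + ‖pi t - pi ti‖ + ‖pj t - pj tj‖ := by
          gcongr; exact norm_add_le _ _
  linarith
end
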